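/- arXiv:1910.12623 — 2 statements merged into one kernel-verified Lean document; each statement's English description precedes it below -/
import Mathlib

section
/- Let $G>0$, $H\geq 0$, $l\in(0,1)$ be real numbers and $d\geq 2$ an integer. Then for every choice of real numbers $a_0,\dots,a_d$ satisfying $\max\{-Gl/4, -G^2/(4H(d-1))\} < a_0 \leq 0$ (interpreting $G^2/(4H(d-1))$ as $+\infty$ when $H=0$), $a_1\geq G$, and $|a_i|\leq H$ for all $i\geq 2$, the polynomial $p(t)=\sum_{i=0}^d a_i t^i$ takes a strictly positive value at some point of the open interval $(0, l/2)$. -/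
/-!
For `|t| ≤ 1` the terms of degree at least two contribute at least `-H (d - 1) t²`, so `p` is
bounded below by the quadratic `q t = a₀ + G t - H (d - 1) t²`. At `t₀ = -2 a₀ / G < l / 2` one has
`G² q(t₀) = -a₀ (G² + 4 H (d - 1) a₀) ≥ 0`, and the second bound on `a₀` makes `q` strictly
increasing at `t₀`, so `q` is positive just to the right of `t₀`.
-/

open Finset Filter Topology

lemma abs_sum_Ico_two_mul_pow_le {a : ℕ → ℝ} {H t : ℝ} {n : ℕ} (ht : |t| ≤ 1)
    (ha : ∀ i ∈ Ico 2 n, |a i| ≤ H) :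
    |∑ i ∈ Ico 2 n, a i * t ^ i| ≤ (n - 2 : ℕ) * H * t ^ 2 := by
  have hterm : ∀ i ∈ Ico 2 n, |a i * t ^ i| ≤ H * t ^ 2 := by
    intro i hi
    rw [abs_mul, abs_pow, ← sq_abs t]
    exact mul_le_mul (ha i hi) (pow_le_pow_of_le_one (abs_nonneg t) ht (mem_Ico.mp hi).1)
      (by positivity) ((abs_nonneg _).trans (ha i hi))
  calc |∑ i ∈ Ico 2 n, a i * t ^ i|
      ≤ ∑ i ∈ Ico 2 n, |a i * t ^ i| := abs_sum_le_sum_abs _ _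
    _ ≤ ∑ _i ∈ Ico 2 n, H * t ^ 2 := sum_le_sum hterm
    _ = (n - 2 : ℕ) * H * t ^ 2 := by rw [sum_const, Nat.card_Ico, nsmul_eq_mul, mul_assoc]

lemma quadratic_le_sum_range_mul_pow {a : ℕ → ℝ} {H t : ℝ} {d : ℕ} (hd : 1 ≤ d) (ht : |t| ≤ 1)
    (ha : ∀ i, 2 ≤ i → i ≤ d → |a i| ≤ H) :
    a 0 + a 1 * t - H * (d - 1) * t ^ 2 ≤ ∑ i ∈ range (d + 1), a i * t ^ i := by
  have htail : -(H * (d - 1) * t ^ 2) ≤ ∑ i ∈ Ico 2 (d + 1), a i * t ^ i := by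
    have h := abs_sum_Ico_two_mul_pow_le ht fun i hi ↦
      ha i (mem_Ico.mp hi).1 (Nat.lt_succ_iff.mp (mem_Ico.mp hi).2)
    rw [show d + 1 - 2 = d - 1 by omega, Nat.cast_sub hd, Nat.cast_one] at h
    linarith [neg_abs_le (∑ i ∈ Ico 2 (d + 1), a i * t ^ i)]
  rw [← sum_range_add_sum_Ico _ (by omega : 2 ≤ d + 1), sum_range_succ, sum_range_one]
  simp only [pow_zero, pow_one, mul_one]
  linarith

lemma exists_mem_Ioo_quadratic_pos {c G K l : ℝ} (hG : 0 < G) (hc : c ≤ 0)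
    (hcl : -(G * l / 4) < c) (hcK : -G ^ 2 < 4 * K * c) :
    ∃ t ∈ Set.Ioo 0 (l / 2), 0 < c + G * t - K * t ^ 2 := by
  set t₀ := -2 * c / G
  have ht₀ : 0 ≤ t₀ := div_nonneg (by linarith) hG.le
  have ht₀l : t₀ < l / 2 := by rw [div_lt_iff₀ hG]; linarith
  have hslope : K * (t₀ + t₀) < G := by
    have : K * (t₀ + t₀) = -4 * K * c / G := by ring
    rw [this, div_lt_iff₀ hG]; nlinarith
  have hq₀ : 0 ≤ c + G * t₀ - K * t₀ ^ 2 := by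
    have : c + G * t₀ - K * t₀ ^ 2 = -c * (G ^ 2 + 4 * K * c) / G ^ 2 := by
      simp only [t₀]; field_simp; ring
    rw [this]
    exact div_nonneg (mul_nonneg (by linarith) (by linarith)) (sq_nonneg G)
  have hnear : ∀ᶠ t in 𝓝 t₀, t < l / 2 ∧ K * (t + t₀) < G :=
    (eventually_lt_nhds ht₀l).and <|
      (by fun_prop : Continuous fun t ↦ K * (t + t₀)).continuousAt.eventually_lt
        continuousAt_const hslope
  obtain ⟨t, ⟨htl, htK⟩, ht⟩ :=
    ((hnear.filter_mono nhdsWithin_le_nhds).and (self_mem_nhdsWithin (s := Set.Ioi t₀))).exists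
  refine ⟨t, ⟨by linarith, htl⟩, ?_⟩
  have : c + G * t - K * t ^ 2 = (c + G * t₀ - K * t₀ ^ 2) + (t - t₀) * (G - K * (t + t₀)) := by
    ring
  rw [this]
  exact add_pos_of_nonneg_of_pos hq₀ (mul_pos (sub_pos.mpr ht) (sub_pos.mpr htK))

/-- **Numerical lemma** (Lemma `thm:Numerical lemma`).
Let `G > 0`, `H ≥ 0`, `l ∈ (0,1)` be real numbers and `d ≥ 2` an integer.  For every
choice of real numbers `a 0, …, a d` satisfying
`max {-G*l/4, -G^2/(4*H*(d-1))} < a 0 ≤ 0` (the second bound being `-∞` when `H = 0`),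
`a 1 ≥ G`, and `|a i| ≤ H` for all `2 ≤ i ≤ d`, the polynomial `p t = ∑ a i * t ^ i`
takes a strictly positive value at some point of the open interval `(0, l/2)`. -/
theorem numerical_lemma (G H l : ℝ) (hG : 0 < G) (hH : 0 ≤ H) (hl : l ∈ Set.Ioo (0:ℝ) 1)
    (d : ℕ) (hd : 2 ≤ d) (a : ℕ → ℝ)
    (ha0_le : a 0 ≤ 0)
    (ha0_gt₁ : -(G * l / 4) < a 0)
    (ha0_gt₂ : H ≠ 0 → -(G ^ 2 / (4 * H * (d - 1))) < a 0)
    (ha1 : G ≤ a 1)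
    (hai : ∀ i, 2 ≤ i → i ≤ d → |a i| ≤ H) :
    ∃ t ∈ Set.Ioo (0 : ℝ) (l / 2), 0 < ∑ i ∈ Finset.range (d + 1), a i * t ^ i := by
  have hd₁ : (1 : ℝ) < d := by exact_mod_cast hd
  have hdisc : -G ^ 2 < 4 * (H * (d - 1)) * a 0 := by
    rcases hH.eq_or_lt with rfl | hHpos
    · nlinarith
    · have h := ha0_gt₂ hHpos.ne'
      rw [neg_lt, lt_div_iff₀ (by positivity)] at h
      linarith
  obtain ⟨t, ⟨ht₀, htl⟩, hq⟩ := exists_mem_Ioo_quadratic_pos hG ha0_le ha0_gt₁ hdisc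
  have ht₁ : |t| ≤ 1 := by rw [abs_of_pos ht₀]; linarith [hl.2]
  refine ⟨t, ⟨ht₀, htl⟩, ?_⟩
  calc 0 < a 0 + G * t - H * (d - 1) * t ^ 2 := hq
    _ ≤ a 0 + a 1 * t - H * (d - 1) * t ^ 2 := by gcongr
    _ ≤ _ := quadratic_le_sum_range_mul_pow (by omega) ht₁ hai
end

section
/- Let $f\colon X\to T$ be a flat morphism of Noetherian schemes, where $T$ is integral and satisfies Serre's condition $S_1$. If the fiber of $f$ over the generic point of $T$ is reduced, then $X$ is reduced. -/
/-!
Let `A = 𝒪_{X,x}` and `R = 𝒪_{T,f x}`, a domain. Flatness makes `A` torsion-free over `R`, so the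
annihilator of a nonzero `a ∈ A` misses the image of `R ∖ {0}` and lies in a prime `q` of `A` over
`0 ⊂ R`; then `a` survives in `A_q`. The point `y` of `X` given by `q` lies over the generic point
`η` of `T`, and `A → A_q` factors through `𝒪_{X,y}`. Since `𝒪_{T,η}` is already the residue field
`κ(η)`, `Spec 𝒪_{X,y} → X` factors through the generic fiber, so `𝒪_{X,y}` is reduced. Hence a
nilpotent `a` vanishes in `A_q`, i.e. `a = 0`.
-/

open AlgebraicGeometry CategoryTheory CategoryTheory.Limits

open scoped nonZeroDivisors

theorem PrimeSpectrum.exists_comap_eq_bot_torsionOf_le {R A : Type*} [CommRing R] [IsDomain R]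
    [CommRing A] [Algebra R A] [Module.IsTorsionFree R A] {a : A} (ha : a ≠ 0) :
    ∃ p : PrimeSpectrum A, p.asIdeal.comap (algebraMap R A) = ⊥ ∧
      Ideal.torsionOf A A a ≤ p.asIdeal := by
  have hdisj : Disjoint (Ideal.torsionOf A A a : Set A) (Algebra.algebraMapSubmonoid A R⁰) := by
    rw [Set.disjoint_left]
    rintro _ hra ⟨r, hr, rfl⟩
    rw [SetLike.mem_coe, Ideal.mem_torsionOf_iff, smul_eq_mul, ← Algebra.smul_def] at hra
    exact ha ((smul_eq_zero_iff_right (nonZeroDivisors.ne_zero hr)).mp hra)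
  obtain ⟨q, hq, hle, hqdisj⟩ := Ideal.exists_le_prime_disjoint _ _ hdisj
  refine ⟨⟨q, hq⟩, (Submodule.eq_bot_iff _).2 fun r hr ↦ ?_, hle⟩
  by_contra hr0
  exact Set.disjoint_left.mp hqdisj hr ⟨r, mem_nonZeroDivisors_of_ne_zero hr0, rfl⟩

lemma IsLocalization.AtPrime.algebraMap_ne_zero_of_torsionOf_le {A L : Type*} [CommRing A]
    [CommRing L] [Algebra A L] (q : Ideal A) [q.IsPrime] [IsLocalization.AtPrime L q] {a : A}
    (h : Ideal.torsionOf A A a ≤ q) : algebraMap A L a ≠ 0 := by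
  intro ha
  obtain ⟨m, hm⟩ := (IsLocalization.map_eq_zero_iff q.primeCompl L a).mp ha
  exact m.2 (h ((Ideal.mem_torsionOf_iff a (m : A)).mpr hm))

namespace AlgebraicGeometry.Scheme

lemma fromSpecStalk_specializes (X : Scheme) (x : X) (q : Spec (X.presheaf.stalk x)) :
    X.fromSpecStalk x q ⤳ x := by
  simpa using (IsLocalRing.specializes_closedPoint q).map (X.fromSpecStalk x).continuous

lemma stalkSpecializes_stalkMap_fromSpecStalk (X : Scheme) (x : X)
    (q : Spec (X.presheaf.stalk x)) :
    X.presheaf.stalkSpecializes (X.fromSpecStalk_specializes x q) ≫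
      (X.fromSpecStalk x).stalkMap q = StructureSheaf.toStalk (X.presheaf.stalk x) q := by
  apply Spec.map_injective
  rw [← cancel_mono (X.fromSpecStalk x), Spec.map_comp, Category.assoc,
    SpecMap_stalkSpecializes_fromSpecStalk, SpecMap_stalkMap_fromSpecStalk,
    Spec.fromSpecStalk_eq']
  rfl

lemma Hom.apply_fromSpecStalk {X Y : Scheme} (f : X ⟶ Y) (x : X)
    (p : Spec (X.presheaf.stalk x)) :
    f (X.fromSpecStalk x p) = Y.fromSpecStalk (f x) (Spec.map (f.stalkMap x) p) := by
  rw [← Hom.comp_apply, ← SpecMap_stalkMap_fromSpecStalk, Hom.comp_apply]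

lemma fromSpecStalk_genericPoint (X : Scheme) [IsIntegral X] (x : X) :
    X.fromSpecStalk x (genericPoint (Spec (X.presheaf.stalk x))) = genericPoint X := by
  obtain ⟨w, hw⟩ : genericPoint X ∈ Set.range (X.fromSpecStalk x) := by
    rw [range_fromSpecStalk]
    exact genericPoint_specializes x
  refine ((genericPoint_specializes _).antisymm ?_).eq.symm
  rw [← hw]
  exact (genericPoint_specializes w).map (X.fromSpecStalk x).continuous

lemma isReduced_stalk_of_comp_eq_fromSpecStalk {X Y : Scheme} [IsReduced Y] (g : Y ⟶ X) {x : X}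
    (s : Spec (X.presheaf.stalk x) ⟶ Y) (hs : s ≫ g = X.fromSpecStalk x) :
    _root_.IsReduced (X.presheaf.stalk x) := by
  have hinj : Function.Injective (stalkClosedPointTo (s ≫ g)) := by
    rw [hs, stalkClosedPointTo_fromSpecStalk]
    exact (X.presheaf.stalkCongr _).commRingCatIsoToRingEquiv.injective
  rw [stalkClosedPointTo_comp] at hinj
  have := isReduced_of_injective (g.stalkMap _).hom
    (Function.Injective.of_comp (f := stalkClosedPointTo s) hinj)
  have hpt : (s ≫ g) (IsLocalRing.closedPoint _) = x := by
    rw [hs, fromSpecStalk_closedPoint]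
  rwa [hpt] at this

lemma isIso_residue_of_isField (X : Scheme) (x : X) (h : IsField (X.presheaf.stalk x)) :
    IsIso (X.residue x) := by
  have hinj : Function.Injective (IsLocalRing.residue (X.presheaf.stalk x)) := by
    rw [RingHom.injective_iff_ker_eq_bot, IsLocalRing.ker_residue,
      ← IsLocalRing.isField_iff_maximalIdeal_eq.mp h]
  exact (ConcreteCategory.isIso_iff_bijective _).2 ⟨hinj, X.residue_surjective x⟩

lemma isReduced_stalk_of_isReduced_fiber {X Y : Scheme} (f : X ⟶ Y) (x : X)
    [IsIso (Y.residue (f x))] [IsReduced (f.fiber (f x))] :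
    _root_.IsReduced (X.presheaf.stalk x) := by
  refine isReduced_stalk_of_comp_eq_fromSpecStalk (f.fiberι (f x))
    (pullback.lift (X.fromSpecStalk x) (Spec.map (inv (Y.residue (f x)) ≫ f.stalkMap x)) ?_)
    (pullback.lift_fst _ _ _)
  rw [fromSpecResidueField, ← Spec.map_comp_assoc, IsIso.hom_inv_id_assoc,
    SpecMap_stalkMap_fromSpecStalk]

lemma isReduced_stalk_of_isReduced_fiber_genericPoint {X T : Scheme} [IsIntegral T] (f : X ⟶ T)
    [IsReduced (f.fiber (genericPoint T))] (y : X) (hy : f y = genericPoint T) :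
    _root_.IsReduced (X.presheaf.stalk y) := by
  have : IsIso (T.residue (f y)) := by
    rw [hy]
    exact T.isIso_residue_of_isField _ (Field.toIsField T.functionField)
  have : IsReduced (f.fiber (f y)) := hy ▸ ‹_›
  exact isReduced_stalk_of_isReduced_fiber f y

lemma isReduced_stalk_of_flat {X T : Scheme} [IsIntegral T] (f : X ⟶ T) (x : X)
    (hflat : letI := (f.stalkMap x).hom.toAlgebra;
      Module.Flat (T.presheaf.stalk (f x)) (X.presheaf.stalk x))
    (hgen : ∀ y : X, f y = genericPoint T → _root_.IsReduced (X.presheaf.stalk y)) :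
    _root_.IsReduced (X.presheaf.stalk x) := by
  let := (f.stalkMap x).hom.toAlgebra
  refine ⟨fun a ha ↦ by_contra fun ha0 ↦ ?_⟩
  obtain ⟨p, hpbot, hle⟩ :=
    PrimeSpectrum.exists_comap_eq_bot_torsionOf_le (R := T.presheaf.stalk (f x)) ha0
  have hp : f (X.fromSpecStalk x p) = genericPoint T := by
    have : Spec.map (f.stalkMap x) p = genericPoint (Spec (T.presheaf.stalk (f x))) := by
      rw [genericPoint_eq_bot_of_affine]
      exact PrimeSpectrum.ext hpbot
    rw [Hom.apply_fromSpecStalk f x p, this, fromSpecStalk_genericPoint]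
  have := hgen _ hp
  apply IsLocalization.AtPrime.algebraMap_ne_zero_of_torsionOf_le
    (L := (Spec.structureSheaf (X.presheaf.stalk x)).presheaf.stalk p) p.asIdeal hle
  change StructureSheaf.toStalk (X.presheaf.stalk x) p a = 0
  rw [← stalkSpecializes_stalkMap_fromSpecStalk X x p]
  exact (congrArg ((X.fromSpecStalk x).stalkMap p)
    (ha.map (X.presheaf.stalkSpecializes _).hom).eq_zero).trans (map_zero _)

end AlgebraicGeometry.Scheme

theorem reduced_of_flat_with_reduced_generic_fiber_general
    (X T : Scheme) [IsIntegral T] (f : X ⟶ T)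
    (hflat : ∀ x : X, letI := (f.stalkMap x).hom.toAlgebra;
      Module.Flat (T.presheaf.stalk (f.base x)) (X.presheaf.stalk x))
    (hgen : IsReduced (pullback f (T.fromSpecResidueField (genericPoint T)))) :
    IsReduced X := by
  have : IsReduced (f.fiber (genericPoint T)) := hgen
  have (x : X) := Scheme.isReduced_stalk_of_flat f x (hflat x)
    (Scheme.isReduced_stalk_of_isReduced_fiber_genericPoint f)
  exact isReduced_of_isReduced_stalk X

/-- Let `f : X ⟶ T` be a flat morphism of Noetherian schemes, where `T` is integral and
satisfies Serre's condition `S₁` (every associated prime of each local ring is minimal).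
If the fiber of `f` over the generic point of `T` is reduced, then `X` is reduced. -/
theorem reduced_of_flat_with_reduced_generic_fiber
    (X T : Scheme) [AlgebraicGeometry.IsNoetherian X] [AlgebraicGeometry.IsNoetherian T]
    [IsIntegral T] (f : X ⟶ T)
    (hflat : ∀ x : X, letI := (f.stalkMap x).hom.toAlgebra;
      Module.Flat (T.presheaf.stalk (f.base x)) (X.presheaf.stalk x))
    (hS1 : ∀ t : T, ∀ p ∈ associatedPrimes (T.presheaf.stalk t) (T.presheaf.stalk t),
      p ∈ minimalPrimes (T.presheaf.stalk t))
    (hgen : IsReduced (pullback f (T.fromSpecResidueField (genericPoint T)))) :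
    IsReduced X :=
  reduced_of_flat_with_reduced_generic_fiber_general X T f hflat hgen
end
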